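/- arXiv:2101.05103 — 2 statements merged into one kernel-verified Lean document; each statement's English description precedes it below -/
import Mathlib

section
/- For every integer d ≥ 2, every s > 0 and every y ∈ [0,1]^d with |y| > 0: c_{1,s}(y) ≤ ∫_{s|y|}^{s} ( log w − log(s|y|) )^{d−1} e^{−w} dw. -/
open MeasureTheory

/-- The volume `|x| = x^(1) ⋯ x^(d)` of the box `[0,x]` for `x ∈ [0,1]^d`. -/
noncomputable def pvol {d : ℕ} (x : Fin d → ℝ) : ℝ := ∏ j, x j

/-- The unit cube `[0,1]^d`. -/
def cube (d : ℕ) : Set (Fin d → ℝ) := Set.Icc 0 1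

/-- The function `c_{α,s}(y) = s ∫_{[0,1]^d} 1_{x ⪰ y} e^{-α s |x|} dx`. -/
noncomputable def cAS {d : ℕ} (α s : ℝ) (y : Fin d → ℝ) : ℝ :=
  s * ∫ x in cube d,
    Set.indicator {x : Fin d → ℝ | y ≤ x} (fun x => Real.exp (-(α * s * pvol x))) x

open Set Real

/-!
Split off the first coordinate: by Fubini, `∫_{[y,1]} φ(∏ x) = ∫_{y₀}^1 ∫_{[y',1]} φ(a ∏ x') da`,
and the inner integral is bounded by induction, applied to `φ(a ·)`. The substitution `w = a u`
turns that bound into `a⁻¹ ∫_{aP'}^{a} (log w - log P)^k φ(w) dw`, where `P = y₀ P' ≤ a P'`.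
Exchanging the order of integration over the triangle `a P' ≤ w ≤ a`, the weight `∫ da / a` over
`a ∈ [y₀, w / P']` is at most `log w - log P`, which raises the power of the logarithm by one.
The theorem is the case `φ(u) = exp (-s u)`, rescaled by `w = s u`.
-/

theorem setIntegral_Icc_fin_succ {n : ℕ} {f : (Fin (n + 1) → ℝ) → ℝ} {y z : Fin (n + 1) → ℝ}
    (hf : IntegrableOn f (Icc y z)) :
    ∫ x in Icc y z, f x =
      ∫ a in Icc (y 0) (z 0), ∫ x in Icc (Fin.tail y) (Fin.tail z), f (Fin.cons a x) := by
  set e : ℝ × (Fin n → ℝ) ≃ᵐ (Fin (n + 1) → ℝ) :=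
    (MeasurableEquiv.piFinSuccAbove (fun _ => ℝ) 0).symm
  have he : MeasurePreserving e := (volume_preserving_piFinSuccAbove (fun _ => ℝ) 0).symm _
  have hpre : e ⁻¹' Icc y z = Icc (y 0) (z 0) ×ˢ Icc (Fin.tail y) (Fin.tail z) :=
    ((Fin.insertNthOrderIso (fun _ => ℝ) 0).preimage_Icc _ _).trans (Icc_prod_eq _ _)
  have hf' := (he.integrableOn_comp_preimage e.measurableEmbedding).2 hf
  rw [hpre, Measure.volume_eq_prod] at hf'
  rw [← he.setIntegral_preimage_emb e.measurableEmbedding, hpre, Measure.volume_eq_prod]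
  refine (setIntegral_prod (f ∘ e) hf').trans ?_
  simp [e, MeasurableEquiv.piFinSuccAbove_symm_apply, Fin.insertNthEquiv]

theorem setIntegral_Icc_fin_one {f : (Fin 1 → ℝ) → ℝ} (y z : Fin 1 → ℝ) :
    ∫ x in Icc y z, f x = ∫ a in Icc (y 0) (z 0), f (fun _ => a) := by
  have hpre : MeasurableEquiv.funUnique (Fin 1) ℝ ⁻¹' Icc (y 0) (z 0) = Icc y z := by
    ext x
    simp [Pi.le_def]
  rw [← (volume_preserving_funUnique (Fin 1) ℝ).setIntegral_preimage_emb
    (MeasurableEquiv.measurableEmbedding _), hpre]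
  congr! 2 with x
  exact congrArg f (funext fun i => by rw [Subsingleton.elim i default]; rfl)

theorem intervalIntegral_log_sub_pow_mul_comp_mul (φ : ℝ → ℝ) (k : ℕ) {a p q : ℝ} (ha : 0 < a)
    (hp : 0 < p) (hq : 0 < q) :
    ∫ u in p..q, (log u - log p) ^ k * φ (a * u) =
      a⁻¹ * ∫ w in a * p..a * q, (log w - log (a * p)) ^ k * φ w := by
  rw [← smul_eq_mul, ← intervalIntegral.integral_comp_mul_left _ ha.ne']
  refine intervalIntegral.integral_congr fun u hu => ?_
  have hu : 0 < u := lt_of_lt_of_le (lt_min hp hq) hu.1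
  simp only [log_mul ha.ne' hu.ne', log_mul ha.ne' hp.ne', add_sub_add_left_eq_sub]

theorem intervalIntegral_log_sub_pow_mul_le {φ : ℝ → ℝ} {p q r : ℝ} (k : ℕ)
    (hφ : ContinuousOn φ (Icc q r)) (hφ0 : ∀ w ∈ Icc q r, 0 ≤ φ w) (hp : 0 < p) (hpq : p ≤ q)
    (hqr : q ≤ r) :
    ∫ w in q..r, (log w - log q) ^ k * φ w ≤ ∫ w in q..r, (log w - log p) ^ k * φ w := by
  have hlog : ContinuousOn log (Icc q r) :=
    continuousOn_log.mono fun w hw => (hp.trans_le (hpq.trans hw.1)).ne'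
  have hint (c : ℝ) : IntervalIntegrable (fun w => (log w - log c) ^ k * φ w) volume q r :=
    (((hlog.sub continuousOn_const).pow k).mul hφ).intervalIntegrable_of_Icc hqr
  refine intervalIntegral.integral_mono_on hqr (hint q) (hint p) fun w hw => ?_
  have hlog_q : log q ≤ log w := log_le_log (hp.trans_le hpq) hw.1
  have hlog_p : log p ≤ log q := log_le_log hp hpq
  gcongr
  exact hφ0 w hw

theorem setIntegral_inv_le_log_sub_log {s : Set ℝ} {p q : ℝ} (hp : 0 < p) (hpq : p ≤ q)
    (hs : s ⊆ Icc p q) : ∫ x in s, x⁻¹ ≤ log q - log p := by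
  have hinv : ContinuousOn (fun x : ℝ => x⁻¹) (Icc p q) :=
    continuousOn_inv₀.mono fun x hx => (hp.trans_le hx.1).ne'
  calc ∫ x in s, x⁻¹ ≤ ∫ x in Icc p q, x⁻¹ :=
        setIntegral_mono_set (hinv.integrableOn_compact isCompact_Icc)
          ((ae_restrict_iff' measurableSet_Icc).2 (.of_forall fun x hx =>
            inv_nonneg.2 (hp.le.trans hx.1)))
          hs.eventuallyLE
    _ = log q - log p := by
      rw [integral_Icc_eq_integral_Ioc, ← intervalIntegral.integral_of_le hpq,
        integral_inv_of_pos hp (hp.trans_le hpq), log_div (hp.trans_le hpq).ne' hp.ne']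

noncomputable def triangleKernel (g : ℝ → ℝ) (c : ℝ) : ℝ × ℝ → ℝ :=
  {p : ℝ × ℝ | p.1 * c ≤ p.2 ∧ p.2 ≤ p.1}.indicator fun p => g p.2 / p.1

section TriangleKernel

variable {g : ℝ → ℝ} {b c : ℝ}

theorem integrable_triangleKernel (hb : 0 < b) (hg : ContinuousOn g (Icc (b * c) 1)) :
    Integrable (triangleKernel g c)
      ((volume.restrict (Icc b 1)).prod (volume.restrict (Icc (b * c) 1))) := by
  rw [Measure.prod_restrict, ← Measure.volume_eq_prod]
  refine IntegrableOn.indicator ?_ ((measurableSet_le (measurable_fst.mul_const c)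
    measurable_snd).inter (measurableSet_le measurable_snd measurable_fst))
  refine ContinuousOn.integrableOn_compact (isCompact_Icc.prod isCompact_Icc) ?_
  exact (hg.comp continuousOn_snd fun p hp => hp.2).div continuousOn_fst
    fun p hp => (hb.trans_le hp.1.1).ne'

theorem setIntegral_triangleKernel_fst (hb : 0 < b) (hc : 0 < c) (hc1 : c ≤ 1) {a : ℝ}
    (ha : a ∈ Icc b 1) :
    ∫ w in Icc (b * c) 1, triangleKernel g c (a, w) = a⁻¹ * ∫ w in a * c..a, g w := by
  have hac : a * c ≤ a := mul_le_of_le_one_right (hb.le.trans ha.1) hc1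
  have hsub : Icc (a * c) a ⊆ Icc (b * c) 1 :=
    Icc_subset_Icc (mul_le_mul_of_nonneg_right ha.1 hc.le) ha.2
  change ∫ w in Icc (b * c) 1, (Icc (a * c) a).indicator (fun w => g w / a) w = _
  rw [setIntegral_indicator measurableSet_Icc, inter_eq_right.2 hsub,
    integral_Icc_eq_integral_Ioc, ← intervalIntegral.integral_of_le hac,
    intervalIntegral.integral_div, div_eq_inv_mul]

theorem setIntegral_triangleKernel_snd_le (hb : 0 < b) (hc : 0 < c)
    (hg0 : ∀ w ∈ Icc (b * c) 1, 0 ≤ g w) {w : ℝ} (hw : w ∈ Icc (b * c) 1) :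
    ∫ a in Icc b 1, triangleKernel g c (a, w) ≤ (log w - log (b * c)) * g w := by
  change ∫ a in Icc b 1, {a | a * c ≤ w ∧ w ≤ a}.indicator (fun a => g w / a) a ≤ _
  have hbw : b ≤ w / c := (le_div_iff₀ hc).2 hw.1
  have hsub : Icc b 1 ∩ {a | a * c ≤ w ∧ w ≤ a} ⊆ Icc b (w / c) :=
    fun a ha => ⟨ha.1.1, (le_div_iff₀ hc).2 ha.2.1⟩
  have hS : MeasurableSet {a : ℝ | a * c ≤ w ∧ w ≤ a} :=
    (measurableSet_le (measurable_id.mul_const c) measurable_const).inter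
      (measurableSet_le measurable_const measurable_id)
  rw [setIntegral_indicator hS]
  simp_rw [div_eq_mul_inv (g w)]
  rw [integral_const_mul]
  calc g w * ∫ a in Icc b 1 ∩ {a | a * c ≤ w ∧ w ≤ a}, a⁻¹
      ≤ g w * (log (w / c) - log b) :=
        mul_le_mul_of_nonneg_left (setIntegral_inv_le_log_sub_log hb hbw hsub) (hg0 w hw)
    _ = (log w - log (b * c)) * g w := by
        have hw0 : 0 < w := (mul_pos hb hc).trans_le hw.1
        rw [log_div hw0.ne' hc.ne', log_mul hb.ne' hc.ne']
        ring

theorem setIntegral_inv_mul_intervalIntegral_le (hb : 0 < b) (hb1 : b ≤ 1) (hc : 0 < c)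
    (hc1 : c ≤ 1) (hg : ContinuousOn g (Icc (b * c) 1)) (hg0 : ∀ w ∈ Icc (b * c) 1, 0 ≤ g w) :
    IntegrableOn (fun a => a⁻¹ * ∫ w in a * c..a, g w) (Icc b 1) ∧
      ∫ a in Icc b 1, a⁻¹ * ∫ w in a * c..a, g w ≤
        ∫ w in b * c..1, (log w - log (b * c)) * g w := by
  have hK := integrable_triangleKernel hb hg
  have hfst : EqOn (fun a => ∫ w in Icc (b * c) 1, triangleKernel g c (a, w))
      (fun a => a⁻¹ * ∫ w in a * c..a, g w) (Icc b 1) :=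
    fun a ha => setIntegral_triangleKernel_fst hb hc hc1 ha
  refine ⟨IntegrableOn.congr_fun hK.integral_prod_left hfst measurableSet_Icc, ?_⟩
  have hlog : ContinuousOn (fun w => log w - log (b * c)) (Icc (b * c) 1) :=
    (continuousOn_log.mono fun w hw => ((mul_pos hb hc).trans_le hw.1).ne').sub
      continuousOn_const
  calc ∫ a in Icc b 1, a⁻¹ * ∫ w in a * c..a, g w
      = ∫ a in Icc b 1, ∫ w in Icc (b * c) 1, triangleKernel g c (a, w) :=
        (setIntegral_congr_fun measurableSet_Icc hfst).symm
    _ = ∫ w in Icc (b * c) 1, ∫ a in Icc b 1, triangleKernel g c (a, w) :=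
        integral_integral_swap hK
    _ ≤ ∫ w in Icc (b * c) 1, (log w - log (b * c)) * g w :=
        setIntegral_mono_on hK.integral_prod_right
          ((hlog.mul hg).integrableOn_compact isCompact_Icc) measurableSet_Icc
          fun w hw => setIntegral_triangleKernel_snd_le hb hc hg0 hw
    _ = ∫ w in b * c..1, (log w - log (b * c)) * g w := by
        rw [integral_Icc_eq_integral_Ioc,
          intervalIntegral.integral_of_le (mul_le_one₀ hb1 hc.le hc1)]

end TriangleKernel

theorem setIntegral_Icc_comp_prod_le (d : ℕ) {φ : ℝ → ℝ} (hφ : Continuous φ)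
    (hφ0 : ∀ u, 0 ≤ φ u) {y : Fin (d + 1) → ℝ} (hy0 : ∀ j, 0 < y j) (hy1 : ∀ j, y j ≤ 1) :
    ∫ x in Icc y 1, φ (∏ j, x j) ≤
      ∫ u in (∏ j, y j)..1, (log u - log (∏ j, y j)) ^ d * φ u := by
  induction d generalizing φ with
  | zero =>
    rw [setIntegral_Icc_fin_one, integral_Icc_eq_integral_Ioc, Pi.one_apply,
      ← intervalIntegral.integral_of_le (hy1 0)]
    simp
  | succ d ih =>
    set P' := ∏ j, Fin.tail y j
    have hP'0 : 0 < P' := Finset.prod_pos fun j _ => hy0 j.succ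
    have hP'1 : P' ≤ 1 := Finset.prod_le_one (fun j _ => (hy0 j.succ).le) fun j _ => hy1 j.succ
    have hP : ∏ j, y j = y 0 * P' := Fin.prod_univ_succ y
    set g := fun w => (log w - log (y 0 * P')) ^ d * φ w
    have hg : ContinuousOn g (Icc (y 0 * P') 1) :=
      ((continuousOn_log.mono fun w hw => ((mul_pos (hy0 0) hP'0).trans_le hw.1).ne').sub
        continuousOn_const |>.pow d).mul hφ.continuousOn
    have hg0 : ∀ w ∈ Icc (y 0 * P') 1, 0 ≤ g w := fun w hw =>
      mul_nonneg (pow_nonneg (sub_nonneg.2 (log_le_log (mul_pos (hy0 0) hP'0) hw.1)) d) (hφ0 w)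
    obtain ⟨hint, hswap⟩ :=
      setIntegral_inv_mul_intervalIntegral_le (hy0 0) (hy1 0) hP'0 hP'1 hg hg0
    have hsection : ∀ a ∈ Icc (y 0) 1,
        ∫ x in Icc (Fin.tail y) 1, φ (a * ∏ j, x j) ≤ a⁻¹ * ∫ w in a * P'..a, g w := by
      intro a ha
      have ha0 : 0 < a := (hy0 0).trans_le ha.1
      calc ∫ x in Icc (Fin.tail y) 1, φ (a * ∏ j, x j)
          ≤ ∫ u in P'..1, (log u - log P') ^ d * φ (a * u) :=
            ih (hφ.comp (continuous_const_mul a)) (fun u => hφ0 _) (fun j => hy0 j.succ)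
              fun j => hy1 j.succ
        _ = a⁻¹ * ∫ w in a * P'..a * 1, (log w - log (a * P')) ^ d * φ w :=
            intervalIntegral_log_sub_pow_mul_comp_mul φ d ha0 hP'0 one_pos
        _ ≤ a⁻¹ * ∫ w in a * P'..a, g w := by
            rw [mul_one]
            gcongr
            exact intervalIntegral_log_sub_pow_mul_le d hφ.continuousOn (fun w _ => hφ0 w)
              (mul_pos (hy0 0) hP'0) (mul_le_mul_of_nonneg_right ha.1 hP'0.le)
              (mul_le_of_le_one_right ha0.le hP'1)
    calc ∫ x in Icc y 1, φ (∏ j, x j)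
        = ∫ a in Icc (y 0) 1, ∫ x in Icc (Fin.tail y) 1, φ (a * ∏ j, x j) := by
          rw [setIntegral_Icc_fin_succ ((by fun_prop : Continuous fun x : Fin (d + 2) → ℝ =>
            φ (∏ j, x j)).continuousOn.integrableOn_compact isCompact_Icc)]
          simp only [Fin.prod_cons]
          rfl
      _ ≤ ∫ a in Icc (y 0) 1, a⁻¹ * ∫ w in a * P'..a, g w :=
          integral_mono_of_nonneg (.of_forall fun a => setIntegral_nonneg measurableSet_Icc
            fun x _ => hφ0 _) hint ((ae_restrict_iff' measurableSet_Icc).2 (.of_forall hsection))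
      _ ≤ ∫ w in (y 0 * P')..1, (log w - log (y 0 * P')) * g w := hswap
      _ = ∫ u in (∏ j, y j)..1, (log u - log (∏ j, y j)) ^ (d + 1) * φ u := by
          simp only [hP, g, ← mul_assoc, ← pow_succ']

theorem cAS_eq_setIntegral_Icc {d : ℕ} (α s : ℝ) {y : Fin d → ℝ} (hy : y ∈ cube d) :
    cAS α s y = s * ∫ x in Icc y 1, exp (-(α * s * pvol x)) := by
  have hset : cube d ∩ {x | y ≤ x} = Icc y 1 :=
    ext fun x => ⟨fun h => ⟨h.2, h.1.2⟩, fun h => ⟨⟨hy.1.trans h.1, h.2⟩, h.1⟩⟩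
  rw [cAS, setIntegral_indicator (t := {x | y ≤ x}) measurableSet_Ici, hset]

/-- For `d ≥ 2`, `s > 0` and `y ∈ [0,1]^d` with `|y| > 0`:
`c_{1,s}(y) ≤ ∫_{s|y|}^{s} (log w - log(s|y|))^{d-1} e^{-w} dw`. -/
theorem stmt5 (d : ℕ) (hd : 2 ≤ d) (s : ℝ) (hs : 0 < s)
    (y : Fin d → ℝ) (hy : y ∈ cube d) (hvy : 0 < pvol y) :
    cAS 1 s y ≤
      ∫ w in (s * pvol y)..s,
        (Real.log w - Real.log (s * pvol y)) ^ (d - 1) * Real.exp (-w) := by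
  obtain ⟨m, rfl⟩ : ∃ m, d = m + 1 := ⟨d - 1, by omega⟩
  have hy0 (j : Fin (m + 1)) : 0 < y j :=
    (hy.1 j).lt_of_ne fun h => hvy.ne' (Finset.prod_eq_zero (Finset.mem_univ j) h.symm)
  have hbound := setIntegral_Icc_comp_prod_le m (φ := fun u => exp (-(s * u))) (by fun_prop)
    (fun u => (exp_pos _).le) hy0 fun j => hy.2 j
  rw [cAS_eq_setIntegral_Icc 1 s hy, Nat.add_sub_cancel]
  calc s * ∫ x in Icc y 1, exp (-(1 * s * pvol x))
      ≤ s * ∫ u in pvol y..1, (log u - log (pvol y)) ^ m * exp (-(s * u)) := by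
        simp only [one_mul]
        exact mul_le_mul_of_nonneg_left hbound hs.le
    _ = ∫ w in s * pvol y..s, (log w - log (s * pvol y)) ^ m * exp (-w) := by
        rw [intervalIntegral_log_sub_pow_mul_comp_mul (fun w => exp (-w)) m hs hvy one_pos,
          mul_one, mul_inv_cancel_left₀ hs.ne']
end

section
/- For every d ∈ ℕ, every i ∈ ℕ and every α > 0 there exists a constant C > 0, depending only on d, i and α, such that for all s ≥ 1: s ∫_{[0,1]^d} ( s ∫_{[0,1]^d} e^{−α s |x ∨ y|} dx )^i dy ≤ C (1 + log s)^{d−1}. -/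
open MeasureTheory

/-!
Write `a = t |y|` with `t = α s`. Integrating out the first coordinate turns `|x ∨ y|` into
`max (u, y₀) · |x' ∨ y'|`, and `∫₀¹ max (u, b)^{-1-p} du ≤ (1 + 1/p) b^{-p}` then shows by
induction on `d` that `supExpIntegral d t y = t ∫ e^{-t |x ∨ y|} dx ≤ C_p a^{-p}` for every
`p > 0`. With `p = 1/(2i)` and `p = 3/(2i)`, the `i`-th power of the inner integral is at most a
multiple of `decay a = min (a^{-1/2}, a^{-3/2})`. For `decayMass d t = t ∫ decay (t |y|) dy` the
same splitting gives `decayMass (d + 1) t = ∫₀¹ decayMass d (t u) du / u`, hence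
`decayMass d t ≤ 2^d √t`; for `t ≥ 1`, splitting at `u = 1/t` shows that every coordinate after
the first costs one factor `1 + log t`, the first one none because `decay` is integrable at
infinity.
-/

open Set
open scoped ENNReal

section Cube

variable {d : ℕ}

@[fun_prop]
lemma continuous_pvol : Continuous (pvol (d := d)) :=
  continuous_finsetProd _ fun j _ => continuous_apply j

@[fun_prop]
lemma measurable_pvol : Measurable (pvol (d := d)) :=
  continuous_pvol.measurable

@[fun_prop]
lemma measurable_pvol_sup (y : Fin d → ℝ) : Measurable fun x => pvol (x ⊔ y) :=
  (continuous_pvol.comp <| continuous_pi fun j =>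
    (continuous_apply j).max continuous_const).measurable

lemma pvol_pos {x : Fin d → ℝ} (hx : ∀ j, 0 < x j) : 0 < pvol x :=
  Finset.prod_pos fun j _ => hx j

lemma pvol_succ (x : Fin (d + 1) → ℝ) : pvol x = x 0 * pvol (Fin.tail x) :=
  Fin.prod_univ_succ _

lemma pvol_cons (u : ℝ) (x : Fin d → ℝ) : pvol (Fin.cons u x : Fin (d + 1) → ℝ) = u * pvol x :=
  pvol_succ _

lemma volume_restrict_cube :
    volume.restrict (cube d) = Measure.pi fun _ => volume.restrict (Icc (0 : ℝ) 1) := by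
  rw [cube, ← pi_univ_Icc, volume_pi, Measure.restrict_pi_pi]; rfl

lemma lintegral_cube_zero (F : (Fin 0 → ℝ) → ℝ≥0∞) : ∫⁻ x in cube 0, F x = F 0 := by
  rw [volume_restrict_cube, Measure.pi_of_empty, lintegral_dirac]
  congr 1; exact Subsingleton.elim _ _

lemma lintegral_cube_succ {F : (Fin (d + 1) → ℝ) → ℝ≥0∞} (hF : Measurable F) :
    ∫⁻ x in cube (d + 1), F x = ∫⁻ u in Icc 0 1, ∫⁻ x in cube d, F (Fin.cons u x) := by
  rw [volume_restrict_cube, volume_restrict_cube, ← ((measurePreserving_piFinSuccAbove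
      (fun _ => volume.restrict (Icc (0 : ℝ) 1)) 0).symm).lintegral_comp hF,
    lintegral_prod (fun p => F _) (hF.comp (MeasurableEquiv.measurable _)).aemeasurable]
  simp [MeasurableEquiv.piFinSuccAbove_symm_apply, Fin.insertNthEquiv, Fin.insertNth_zero']

lemma ae_restrict_cube_pos : ∀ᵐ y ∂(volume.restrict (cube d)), ∀ j, 0 < y j := by
  rw [cube, volume_pi, ← Measure.restrict_congr_set Measure.univ_pi_Ioo_ae_eq_Icc]
  filter_upwards [ae_restrict_mem (MeasurableSet.univ_pi fun _ => measurableSet_Ioo)] with y hy j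
  exact (hy j (mem_univ j)).1

end Cube

section OneDimensional

lemma lintegral_Ioc_rpow_sub_one {p c : ℝ} (hp : 0 < p) (hc : 0 ≤ c) :
    ∫⁻ u in Ioc 0 c, ENNReal.ofReal (u ^ (p - 1)) = ENNReal.ofReal (c ^ p / p) := by
  have hint : IntervalIntegrable (fun u : ℝ => u ^ (p - 1)) volume 0 c :=
    intervalIntegral.intervalIntegrable_rpow' (by linarith)
  rw [← ofReal_integral_eq_lintegral_ofReal
      ((intervalIntegrable_iff_integrableOn_Ioc_of_le hc).1 hint)
      ((ae_restrict_iff' measurableSet_Ioc).2 (ae_of_all _ fun u hu => Real.rpow_nonneg hu.1.le _)),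
    ← intervalIntegral.integral_of_le hc, integral_rpow (Or.inl (by linarith))]
  simp [Real.zero_rpow hp.ne']

lemma lintegral_Ioi_rpow_neg_sub_one {p c : ℝ} (hp : 0 < p) (hc : 0 < c) :
    ∫⁻ u in Ioi c, ENNReal.ofReal (u ^ (-p - 1)) = ENNReal.ofReal (c ^ (-p) / p) := by
  rw [← ofReal_integral_eq_lintegral_ofReal (integrableOn_Ioi_rpow_of_lt (by linarith) hc)
      ((ae_restrict_iff' measurableSet_Ioi).2 (ae_of_all _ fun u hu =>
        Real.rpow_nonneg (hc.trans hu).le _)),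
    integral_Ioi_rpow_of_lt (by linarith) hc]
  congr 1
  rw [show -p - 1 + 1 = -p by ring, neg_div_neg_eq]

lemma lintegral_Ioc_inv {c : ℝ} (hc : 0 < c) (hc1 : c ≤ 1) :
    ∫⁻ u in Ioc c 1, ENNReal.ofReal u⁻¹ = ENNReal.ofReal (-Real.log c) := by
  have hint : IntervalIntegrable (fun u : ℝ => u⁻¹) volume c 1 :=
    intervalIntegral.intervalIntegrable_inv (fun u hu => by
      rw [uIcc_of_le hc1] at hu; exact (hc.trans_le hu.1).ne') continuousOn_id
  rw [← ofReal_integral_eq_lintegral_ofReal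
      ((intervalIntegrable_iff_integrableOn_Ioc_of_le hc1).1 hint)
      ((ae_restrict_iff' measurableSet_Ioc).2 (ae_of_all _ fun u hu =>
        inv_nonneg.2 (hc.trans hu.1).le)),
    ← intervalIntegral.integral_of_le hc1, integral_inv_of_pos hc one_pos, one_div,
    Real.log_inv]

lemma lintegral_Icc_max_rpow_le {p b : ℝ} (hp : 0 < p) (hb : 0 < b) :
    ∫⁻ u in Icc 0 1, ENNReal.ofReal (max u b ^ (-p - 1)) ≤
      ENNReal.ofReal ((1 + 1 / p) * b ^ (-p)) := by
  calc ∫⁻ u in Icc 0 1, ENNReal.ofReal (max u b ^ (-p - 1))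
      ≤ ∫⁻ u in Icc 0 b ∪ Ioi b, ENNReal.ofReal (max u b ^ (-p - 1)) :=
        lintegral_mono_set fun u hu => (le_or_gt u b).imp (fun h => ⟨hu.1, h⟩) id
    _ ≤ (∫⁻ _ in Icc 0 b, ENNReal.ofReal (b ^ (-p - 1))) +
          ∫⁻ u in Ioi b, ENNReal.ofReal (u ^ (-p - 1)) := by
        refine (lintegral_union_le _ _ _).trans (add_le_add (le_of_eq ?_) (le_of_eq ?_))
        · exact setLIntegral_congr_fun measurableSet_Icc fun u hu => by rw [max_eq_right hu.2]
        · exact setLIntegral_congr_fun measurableSet_Ioi fun u hu => by rw [max_eq_left hu.le]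
    _ = ENNReal.ofReal ((1 + 1 / p) * b ^ (-p)) := by
        rw [setLIntegral_const, Real.volume_Icc, sub_zero, lintegral_Ioi_rpow_neg_sub_one hp hb,
          ← ENNReal.ofReal_mul (by positivity),
          ← ENNReal.ofReal_add (by positivity) (by positivity)]
        congr 1
        rw [Real.rpow_sub hb, Real.rpow_one]
        field_simp

lemma rpow_le_rpow_mul_exp {x q : ℝ} (hx : 0 ≤ x) (hq : 0 < q) : x ^ q ≤ q ^ q * Real.exp x := by
  have h : (x / q) ^ q ≤ Real.exp (x / q) ^ q :=
    Real.rpow_le_rpow (by positivity) ((Real.add_one_le_exp _).trans' (by linarith)) hq.le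
  rwa [Real.div_rpow hx hq.le, ← Real.exp_mul, div_mul_cancel₀ _ hq.ne',
    div_le_iff₀ (by positivity), mul_comm] at h

end OneDimensional

section SupKernel

noncomputable def supExpIntegral (d : ℕ) (t : ℝ) (y : Fin d → ℝ) : ℝ≥0∞ :=
  ENNReal.ofReal t * ∫⁻ x in cube d, ENNReal.ofReal (Real.exp (-(t * pvol (x ⊔ y))))

lemma supExpIntegral_zero (t : ℝ) (y : Fin 0 → ℝ) :
    supExpIntegral 0 t y = ENNReal.ofReal (t * Real.exp (-t)) := by
  rw [supExpIntegral, lintegral_cube_zero, pvol, Finset.univ_eq_empty, Finset.prod_empty, mul_one,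
    ENNReal.ofReal_mul' (Real.exp_pos _).le]

lemma supExpIntegral_succ {d : ℕ} (t : ℝ) {y : Fin (d + 1) → ℝ} (hy : 0 < y 0) :
    supExpIntegral (d + 1) t y = ∫⁻ u in Icc 0 1,
      ENNReal.ofReal (max u (y 0))⁻¹ * supExpIntegral d (t * max u (y 0)) (Fin.tail y) := by
  have hsup (u : ℝ) (x : Fin d → ℝ) :
      pvol ((Fin.cons u x : Fin (d + 1) → ℝ) ⊔ y) = max u (y 0) * pvol (x ⊔ Fin.tail y) := by
    rw [pvol_succ]; rfl
  rw [supExpIntegral, lintegral_cube_succ (by fun_prop),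
    ← lintegral_const_mul' _ _ ENNReal.ofReal_ne_top]
  refine setLIntegral_congr_fun measurableSet_Icc fun u _ => ?_
  have hm : 0 < max u (y 0) := hy.trans_le (le_max_right _ _)
  simp only [supExpIntegral, hsup, mul_assoc]
  rw [← mul_assoc, ← ENNReal.ofReal_mul (inv_nonneg.2 hm.le), mul_comm t,
    inv_mul_cancel_left₀ hm.ne']

lemma supExpIntegral_le {p : ℝ} (hp : 0 < p) (d : ℕ) {t : ℝ} (ht : 0 < t) {y : Fin d → ℝ}
    (hy : ∀ j, 0 < y j) :
    supExpIntegral d t y ≤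
      ENNReal.ofReal ((1 + p) ^ (1 + p) * (1 + 1 / p) ^ d * (t * pvol y) ^ (-p)) := by
  induction d generalizing t with
  | zero =>
    rw [supExpIntegral_zero, show pvol y = 1 from Finset.prod_empty, mul_one, pow_zero, mul_one]
    refine ENNReal.ofReal_le_ofReal ?_
    calc t * Real.exp (-t) = t ^ (1 + p) * Real.exp (-t) * t ^ (-p) := by
          rw [mul_right_comm, ← Real.rpow_add ht, add_neg_cancel_right, Real.rpow_one]
      _ ≤ (1 + p) ^ (1 + p) * Real.exp t * Real.exp (-t) * t ^ (-p) := by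
          gcongr; exact rpow_le_rpow_mul_exp ht.le (by linarith)
      _ = (1 + p) ^ (1 + p) * t ^ (-p) := by rw [mul_assoc _ (Real.exp t), ← Real.exp_add,
          add_neg_cancel, Real.exp_zero, mul_one]
  | succ d ih =>
    set C := (1 + p) ^ (1 + p) * (1 + 1 / p) ^ d
    have hw : 0 < pvol (Fin.tail y) := pvol_pos fun j => hy j.succ
    have hpoint : ∀ u ∈ Icc (0 : ℝ) 1,
        ENNReal.ofReal (max u (y 0))⁻¹ * supExpIntegral d (t * max u (y 0)) (Fin.tail y) ≤
          ENNReal.ofReal (C * (t * pvol (Fin.tail y)) ^ (-p)) *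
            ENNReal.ofReal (max u (y 0) ^ (-p - 1)) := by
      intro u _
      have hm : 0 < max u (y 0) := (hy 0).trans_le (le_max_right _ _)
      refine (mul_le_mul_right (ih (y := Fin.tail y) (by positivity) fun j => hy j.succ) _).trans
        (le_of_eq ?_)
      rw [← ENNReal.ofReal_mul (by positivity), ← ENNReal.ofReal_mul (by positivity)]
      congr 1
      rw [mul_right_comm t, Real.mul_rpow (by positivity) hm.le, Real.rpow_sub_one hm.ne']
      ring
    rw [supExpIntegral_succ t (hy 0)]
    refine (setLIntegral_mono' measurableSet_Icc hpoint).trans ?_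
    rw [lintegral_const_mul' _ _ ENNReal.ofReal_ne_top]
    refine (mul_le_mul_right (lintegral_Icc_max_rpow_le hp (hy 0)) _).trans (le_of_eq ?_)
    rw [← ENNReal.ofReal_mul (by positivity), pvol_succ, pow_succ,
      show t * (y 0 * pvol (Fin.tail y)) = t * pvol (Fin.tail y) * y 0 by ring,
      Real.mul_rpow (by positivity) (hy 0).le]
    congr 1
    simp only [C]
    ring

end SupKernel

section DecayMass

noncomputable def decay (v : ℝ) : ℝ := min (v ^ (-(1 / 2) : ℝ)) (v ^ (-(3 / 2) : ℝ))

noncomputable def decayMass (d : ℕ) (t : ℝ) : ℝ≥0∞ :=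
  ENNReal.ofReal t * ∫⁻ y in cube d, ENNReal.ofReal (decay (t * pvol y))

lemma mul_decay {w : ℝ} (hw : 0 < w) :
    w * decay w = min (w ^ (1 / 2 : ℝ)) (w ^ (-(1 / 2) : ℝ)) := by
  rw [decay, mul_min_of_nonneg _ _ hw.le, ← Real.rpow_one_add' hw.le (by norm_num),
    ← Real.rpow_one_add' hw.le (by norm_num)]
  norm_num

lemma decayMass_zero {t : ℝ} (ht : 0 ≤ t) : decayMass 0 t = ENNReal.ofReal (t * decay t) := by
  rw [decayMass, lintegral_cube_zero, show pvol (0 : Fin 0 → ℝ) = 1 from Finset.prod_empty,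
    mul_one, ENNReal.ofReal_mul ht]

lemma decayMass_succ {d : ℕ} (t : ℝ) :
    decayMass (d + 1) t = ∫⁻ u in Ioc 0 1, ENNReal.ofReal u⁻¹ * decayMass d (t * u) := by
  rw [decayMass, lintegral_cube_succ (by unfold decay; fun_prop),
    ← lintegral_const_mul' _ _ ENNReal.ofReal_ne_top, setLIntegral_congr Ioc_ae_eq_Icc.symm]
  refine setLIntegral_congr_fun measurableSet_Ioc fun u hu => ?_
  simp only [decayMass, pvol_cons, mul_assoc]
  rw [← mul_assoc, ← ENNReal.ofReal_mul (inv_nonneg.2 hu.1.le), mul_comm t,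
    inv_mul_cancel_left₀ hu.1.ne']

lemma lintegral_Ioc_inv_mul_le_of_le_sqrt {f : ℝ → ℝ≥0∞} {A t c : ℝ} (hA : 0 ≤ A) (ht : 0 < t)
    (hc : 0 ≤ c) (hf : ∀ w > 0, f w ≤ ENNReal.ofReal (A * w ^ (1 / 2 : ℝ))) :
    ∫⁻ u in Ioc 0 c, ENNReal.ofReal u⁻¹ * f (t * u) ≤
      ENNReal.ofReal (2 * A * (t * c) ^ (1 / 2 : ℝ)) := by
  have hpoint : ∀ u ∈ Ioc 0 c, ENNReal.ofReal u⁻¹ * f (t * u) ≤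
      ENNReal.ofReal (A * t ^ (1 / 2 : ℝ)) * ENNReal.ofReal (u ^ (1 / 2 - 1 : ℝ)) := by
    intro u hu
    refine (mul_le_mul_right (hf _ (mul_pos ht hu.1)) _).trans (le_of_eq ?_)
    rw [← ENNReal.ofReal_mul (inv_nonneg.2 hu.1.le), ← ENNReal.ofReal_mul (by positivity),
      Real.mul_rpow ht.le hu.1.le, Real.rpow_sub_one hu.1.ne']
    congr 1
    ring
  refine (setLIntegral_mono' measurableSet_Ioc hpoint).trans ?_
  rw [lintegral_const_mul' _ _ ENNReal.ofReal_ne_top, lintegral_Ioc_rpow_sub_one (by norm_num) hc,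
    ← ENNReal.ofReal_mul (by positivity), Real.mul_rpow ht.le hc]
  exact le_of_eq (congrArg _ (by ring))

lemma decayMass_le_sqrt (d : ℕ) {t : ℝ} (ht : 0 < t) :
    decayMass d t ≤ ENNReal.ofReal (2 ^ d * t ^ (1 / 2 : ℝ)) := by
  induction d generalizing t with
  | zero =>
    rw [decayMass_zero ht.le, mul_decay ht, pow_zero, one_mul]
    exact ENNReal.ofReal_le_ofReal (min_le_left _ _)
  | succ d ih =>
    rw [decayMass_succ]
    refine (lintegral_Ioc_inv_mul_le_of_le_sqrt (by positivity) ht zero_le_one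
      fun w hw => ih hw).trans (le_of_eq ?_)
    rw [mul_one, pow_succ, mul_comm 2]

lemma decayMass_succ_le_add (d : ℕ) {t : ℝ} (ht : 1 ≤ t) :
    decayMass (d + 1) t ≤ ENNReal.ofReal (2 ^ (d + 1)) +
      ∫⁻ u in Ioc t⁻¹ 1, ENNReal.ofReal u⁻¹ * decayMass d (t * u) := by
  have ht0 : 0 < t := one_pos.trans_le ht
  rw [decayMass_succ, ← Ioc_union_Ioc_eq_Ioc (inv_nonneg.2 ht0.le) (inv_le_one_of_one_le₀ ht)]
  refine (lintegral_union_le _ _ _).trans (add_le_add ?_ le_rfl)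
  refine (lintegral_Ioc_inv_mul_le_of_le_sqrt (by positivity) ht0 (inv_nonneg.2 ht0.le)
    fun w hw => decayMass_le_sqrt d hw).trans (le_of_eq ?_)
  rw [mul_inv_cancel₀ ht0.ne', Real.one_rpow, mul_one, pow_succ, mul_comm]

lemma lintegral_Ioc_inv_mul_decayMass_zero_le {t : ℝ} (ht : 0 < t) :
    ∫⁻ u in Ioc t⁻¹ 1, ENNReal.ofReal u⁻¹ * decayMass 0 (t * u) ≤ ENNReal.ofReal 2 := by
  have hpoint : ∀ u ∈ Ioc t⁻¹ 1, ENNReal.ofReal u⁻¹ * decayMass 0 (t * u) ≤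
      ENNReal.ofReal (t ^ (-(1 / 2) : ℝ)) * ENNReal.ofReal (u ^ (-(1 / 2) - 1 : ℝ)) := by
    intro u hu
    have hu0 : 0 < u := (inv_pos.2 ht).trans hu.1
    rw [decayMass_zero (by positivity), mul_decay (by positivity),
      ← ENNReal.ofReal_mul (inv_nonneg.2 hu0.le), ← ENNReal.ofReal_mul (by positivity)]
    refine ENNReal.ofReal_le_ofReal ((mul_le_mul_of_nonneg_left (min_le_right _ _)
      (inv_nonneg.2 hu0.le)).trans (le_of_eq ?_))
    rw [Real.mul_rpow ht.le hu0.le, Real.rpow_sub_one hu0.ne']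
    ring
  calc ∫⁻ u in Ioc t⁻¹ 1, ENNReal.ofReal u⁻¹ * decayMass 0 (t * u)
      ≤ ∫⁻ u in Ioi t⁻¹, ENNReal.ofReal (t ^ (-(1 / 2) : ℝ)) *
          ENNReal.ofReal (u ^ (-(1 / 2) - 1 : ℝ)) :=
        (setLIntegral_mono' measurableSet_Ioc hpoint).trans (lintegral_mono_set Ioc_subset_Ioi_self)
    _ = ENNReal.ofReal 2 := by
        rw [lintegral_const_mul' _ _ ENNReal.ofReal_ne_top,
          lintegral_Ioi_rpow_neg_sub_one (by norm_num) (inv_pos.2 ht),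
          ← ENNReal.ofReal_mul (by positivity), Real.inv_rpow ht.le, Real.rpow_neg ht.le,
          inv_inv, mul_div_assoc', inv_mul_cancel₀ (by positivity)]
        norm_num

lemma decayMass_succ_le (e : ℕ) {t : ℝ} (ht : 1 ≤ t) :
    decayMass (e + 1) t ≤ ENNReal.ofReal (2 ^ (e + 3) * (1 + Real.log t) ^ e) := by
  have ht0 : 0 < t := one_pos.trans_le ht
  induction e generalizing t with
  | zero =>
    refine (decayMass_succ_le_add 0 ht).trans ?_
    refine (add_le_add le_rfl (lintegral_Ioc_inv_mul_decayMass_zero_le ht0)).trans ?_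
    rw [← ENNReal.ofReal_add (by positivity) zero_le_two]
    exact ENNReal.ofReal_le_ofReal (by norm_num)
  | succ e ih =>
    have hlog : 0 ≤ Real.log t := Real.log_nonneg ht
    have hpoint : ∀ u ∈ Ioc t⁻¹ 1, ENNReal.ofReal u⁻¹ * decayMass (e + 1) (t * u) ≤
        ENNReal.ofReal (2 ^ (e + 3) * (1 + Real.log t) ^ e) * ENNReal.ofReal u⁻¹ := by
      intro u hu
      have htu : 1 ≤ t * u := ((inv_lt_iff_one_lt_mul₀' ht0).1 hu.1).le
      have hlog_le : Real.log (t * u) ≤ Real.log t :=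
        Real.log_le_log (by positivity) (mul_le_of_le_one_right ht0.le hu.2)
      rw [mul_comm]
      refine mul_le_mul_left ((ih htu (by positivity)).trans (ENNReal.ofReal_le_ofReal ?_)) _
      gcongr
      linarith [Real.log_nonneg htu]
    refine (decayMass_succ_le_add (e + 1) ht).trans ?_
    refine (add_le_add le_rfl (setLIntegral_mono' measurableSet_Ioc hpoint)).trans ?_
    rw [lintegral_const_mul' _ _ ENNReal.ofReal_ne_top,
      lintegral_Ioc_inv (inv_pos.2 ht0) (inv_le_one_of_one_le₀ ht), Real.log_inv, neg_neg,
      ← ENNReal.ofReal_mul (by positivity), ← ENNReal.ofReal_add (by positivity) (by positivity)]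
    refine ENNReal.ofReal_le_ofReal ?_
    have hL : 1 ≤ (1 + Real.log t) ^ e := one_le_pow₀ (by linarith)
    have hP : (0 : ℝ) < 2 ^ (e + 1) := by positivity
    rw [pow_succ _ e, show (2 : ℝ) ^ (e + 1 + 3) = 2 ^ (e + 1) * 8 by ring,
      show (2 : ℝ) ^ (e + 1 + 1) = 2 ^ (e + 1) * 2 by ring,
      show (2 : ℝ) ^ (e + 3) = 2 ^ (e + 1) * 4 by ring]
    nlinarith [mul_le_mul_of_nonneg_left hL hP.le, mul_nonneg (mul_nonneg hP.le
      (zero_le_one.trans hL)) hlog]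

lemma decayMass_succ_mul_le (e : ℕ) {α s : ℝ} (hα : 0 < α) (hs : 1 ≤ s) :
    decayMass (e + 1) (α * s) ≤
      ENNReal.ofReal (2 ^ (e + 3) * (1 + |Real.log α|) ^ e * (1 + Real.log s) ^ e) := by
  have hlog_s := Real.log_nonneg hs
  have hlog_α := abs_nonneg (Real.log α)
  rcases le_or_gt 1 (α * s) with ht | ht
  · refine (decayMass_succ_le e ht).trans (ENNReal.ofReal_le_ofReal ?_)
    rw [mul_assoc, ← mul_pow]
    gcongr
    · linarith [Real.log_nonneg ht]
    · rw [Real.log_mul hα.ne' (by positivity)]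
      nlinarith [le_abs_self (Real.log α)]
  · refine (decayMass_le_sqrt (e + 1) (by positivity)).trans (ENNReal.ofReal_le_ofReal ?_)
    calc 2 ^ (e + 1) * (α * s) ^ (1 / 2 : ℝ) ≤ 2 ^ (e + 1) * 1 :=
          by gcongr; exact Real.rpow_le_one (by positivity) ht.le (by norm_num)
      _ ≤ 2 ^ (e + 3) * 1 * 1 := by
          rw [mul_one, mul_one, mul_one]; exact pow_le_pow_right₀ (by norm_num) (by omega)
      _ ≤ 2 ^ (e + 3) * (1 + |Real.log α|) ^ e * (1 + Real.log s) ^ e := by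
          gcongr <;> exact one_le_pow₀ (by linarith)

end DecayMass

section Assembly

lemma ofReal_integral_le_lintegral_ofReal {X : Type*} [MeasurableSpace X] {μ : Measure X}
    {f : X → ℝ} (hf : 0 ≤ f) : ENNReal.ofReal (∫ x, f x ∂μ) ≤ ∫⁻ x, ENNReal.ofReal (f x) ∂μ :=
  (Real.ofReal_le_enorm _).trans ((enorm_integral_le_lintegral_enorm f).trans_eq
    (lintegral_congr fun x => Real.enorm_of_nonneg (hf x)))

lemma exists_supExpIntegral_pow_le_rpow (d : ℕ) {i : ℕ} (hi : i ≠ 0) {q : ℝ} (hq : 0 < q) :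
    ∃ C, 0 ≤ C ∧ ∀ t > 0, ∀ y : Fin d → ℝ, (∀ j, 0 < y j) →
      supExpIntegral d t y ^ i ≤ ENNReal.ofReal (C * (t * pvol y) ^ (-q)) := by
  have hp : 0 < q / i := by positivity
  refine ⟨((1 + q / i) ^ (1 + q / i) * (1 + 1 / (q / i)) ^ d) ^ i, by positivity,
    fun t ht y hy => ?_⟩
  have ha : 0 < t * pvol y := mul_pos ht (pvol_pos hy)
  refine (pow_le_pow_left' (supExpIntegral_le hp d ht hy) i).trans (le_of_eq ?_)
  rw [← ENNReal.ofReal_pow (by positivity), mul_pow, ← Real.rpow_natCast (_ ^ _) i,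
    ← Real.rpow_mul ha.le]
  congr 3
  field_simp

lemma exists_supExpIntegral_pow_le_decay (d : ℕ) {i : ℕ} (hi : i ≠ 0) :
    ∃ K, 0 < K ∧ ∀ t > 0, ∀ y : Fin d → ℝ, (∀ j, 0 < y j) →
      supExpIntegral d t y ^ i ≤ ENNReal.ofReal (K * decay (t * pvol y)) := by
  obtain ⟨C₁, hC₁, h₁⟩ := exists_supExpIntegral_pow_le_rpow d hi (q := 1 / 2) (by norm_num)
  obtain ⟨C₃, hC₃, h₃⟩ := exists_supExpIntegral_pow_le_rpow d hi (q := 3 / 2) (by norm_num)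
  refine ⟨C₁ + C₃ + 1, by positivity, fun t ht y hy => ?_⟩
  have ha : 0 ≤ t * pvol y := (mul_pos ht (pvol_pos hy)).le
  rw [decay, mul_min_of_nonneg _ _ (by positivity), ENNReal.ofReal_min]
  refine le_min ((h₁ t ht y hy).trans (ENNReal.ofReal_le_ofReal ?_))
    ((h₃ t ht y hy).trans (ENNReal.ofReal_le_ofReal ?_))
  · exact mul_le_mul_of_nonneg_right (by linarith) (Real.rpow_nonneg ha _)
  · exact mul_le_mul_of_nonneg_right (by linarith) (Real.rpow_nonneg ha _)

lemma ofReal_mul_setIntegral_exp_le {d : ℕ} {α s : ℝ} (hα : 0 < α) (hs : 0 ≤ s) (y : Fin d → ℝ) :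
    ENNReal.ofReal (s * ∫ x in cube d, Real.exp (-(α * s * pvol (x ⊔ y)))) ≤
      ENNReal.ofReal α⁻¹ * supExpIntegral d (α * s) y := by
  rw [supExpIntegral, ← mul_assoc, ← ENNReal.ofReal_mul (inv_nonneg.2 hα.le),
    inv_mul_cancel_left₀ hα.ne', ENNReal.ofReal_mul hs]
  exact mul_le_mul_right (ofReal_integral_le_lintegral_ofReal fun x => (Real.exp_pos _).le) _

lemma ofReal_mul_setIntegral_pow_le {d i : ℕ} {α s K : ℝ} (hα : 0 < α) (hs : 0 < s) (hK : 0 ≤ K)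
    (hpow : ∀ t > 0, ∀ y : Fin d → ℝ, (∀ j, 0 < y j) →
      supExpIntegral d t y ^ i ≤ ENNReal.ofReal (K * decay (t * pvol y))) :
    ENNReal.ofReal (s * ∫ y in cube d,
        (s * ∫ x in cube d, Real.exp (-(α * s * pvol (x ⊔ y)))) ^ i) ≤
      ENNReal.ofReal α⁻¹ ^ (i + 1) * ENNReal.ofReal K * decayMass d (α * s) := by
  have hnonneg (y : Fin d → ℝ) : 0 ≤ s * ∫ x in cube d, Real.exp (-(α * s * pvol (x ⊔ y))) :=
    mul_nonneg hs.le (integral_nonneg fun x => (Real.exp_pos _).le)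
  have hinner : ∀ᵐ y ∂(volume.restrict (cube d)),
      ENNReal.ofReal ((s * ∫ x in cube d, Real.exp (-(α * s * pvol (x ⊔ y)))) ^ i) ≤
        ENNReal.ofReal α⁻¹ ^ i * ENNReal.ofReal (K * decay (α * s * pvol y)) := by
    filter_upwards [ae_restrict_cube_pos] with y hy
    calc _ = ENNReal.ofReal (s * ∫ x in cube d, Real.exp (-(α * s * pvol (x ⊔ y)))) ^ i :=
          ENNReal.ofReal_pow (hnonneg y) i
      _ ≤ (ENNReal.ofReal α⁻¹ * supExpIntegral d (α * s) y) ^ i :=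
          pow_le_pow_left' (ofReal_mul_setIntegral_exp_le hα hs.le y) i
      _ ≤ _ := by rw [mul_pow]; exact mul_le_mul_right (hpow _ (by positivity) y hy) _
  have hsplit : ENNReal.ofReal s = ENNReal.ofReal α⁻¹ * ENNReal.ofReal (α * s) := by
    rw [← ENNReal.ofReal_mul (inv_nonneg.2 hα.le), inv_mul_cancel_left₀ hα.ne']
  calc _ ≤ ENNReal.ofReal s * ∫⁻ y in cube d, ENNReal.ofReal α⁻¹ ^ i *
          ENNReal.ofReal (K * decay (α * s * pvol y)) := by
        rw [ENNReal.ofReal_mul hs.le]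
        exact mul_le_mul_right ((ofReal_integral_le_lintegral_ofReal fun y =>
          pow_nonneg (hnonneg y) i).trans (lintegral_mono_ae hinner)) _
    _ = _ := by
        simp_rw [ENNReal.ofReal_mul hK]
        rw [lintegral_const_mul' _ _ (by finiteness),
          lintegral_const_mul' _ _ ENNReal.ofReal_ne_top, decayMass, hsplit]
        ring

end Assembly

/-- For every `d, i ∈ ℕ` and `α > 0` there is `C > 0` depending only on `d`, `i`, `α`
with `s ∫_{[0,1]^d} (s ∫_{[0,1]^d} e^{-α s |x ∨ y|} dx)^i dy ≤ C (1 + log s)^{d-1}`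
for all `s ≥ 1`. -/
theorem stmt8 (d : ℕ) (hd : 1 ≤ d) (i : ℕ) (hi : 1 ≤ i) (α : ℝ) (hα : 0 < α) :
    ∃ C : ℝ, 0 < C ∧ ∀ s : ℝ, 1 ≤ s →
      s * ∫ y in cube d,
          (s * ∫ x in cube d, Real.exp (-(α * s * pvol (x ⊔ y)))) ^ i ≤
        C * (1 + Real.log s) ^ (d - 1) := by
  obtain ⟨e, rfl⟩ : ∃ e, d = e + 1 := ⟨d - 1, by omega⟩
  obtain ⟨K, hK, hpow⟩ := exists_supExpIntegral_pow_le_decay (e + 1) (i := i) (by omega)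
  refine ⟨α⁻¹ ^ (i + 1) * K * (2 ^ (e + 3) * (1 + |Real.log α|) ^ e), by positivity,
    fun s hs => ?_⟩
  have hlog : 0 ≤ 1 + Real.log s := by linarith [Real.log_nonneg hs]
  rw [Nat.add_sub_cancel, ← ENNReal.ofReal_le_ofReal_iff (by positivity)]
  calc _ ≤ ENNReal.ofReal α⁻¹ ^ (i + 1) * ENNReal.ofReal K * decayMass (e + 1) (α * s) :=
        ofReal_mul_setIntegral_pow_le hα (one_pos.trans_le hs) hK.le hpow
    _ ≤ ENNReal.ofReal α⁻¹ ^ (i + 1) * ENNReal.ofReal K *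
          ENNReal.ofReal (2 ^ (e + 3) * (1 + |Real.log α|) ^ e * (1 + Real.log s) ^ e) :=
        mul_le_mul_right (decayMass_succ_mul_le e hα hs) _
    _ = _ := by
        rw [← ENNReal.ofReal_pow (by positivity), ← ENNReal.ofReal_mul (by positivity),
          ← ENNReal.ofReal_mul (by positivity)]
        congr 1
        ring
end
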